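/- arXiv:1509.06811 — 7 statements merged into one kernel-verified Lean document; each statement's English description precedes it below -/
import Mathlib

section
/- Let C be a k-linear category that has finite biproducts and in which every idempotent splits. Let P : C^op ⥤ Vect_k and Q : C ⥤ Vect_k be k-linear functors, and suppose given: (i) for every pair of objects c, c' of C a k-bilinear map ε_{c,c'} : P(c) × Q(c') → Hom_C(c, c'), natural in both c and c'; and (ii) a finite family of objects c_1, …, c_n of C together with elements p_i ∈ P(c_i) and q_i ∈ Q(c_i), such that the two triangle identities hold: for every object c and every x ∈ P(c), Σ_{i=1}^n P(ε_{c, c_i}(x, q_i))(p_i) = x, and for every object c and every y ∈ Q(c), Σ_{i=1}^n Q(ε_{c_i, c}(p_i, y))(q_i) = y. Then P is representable: there exist an object y of C and a natural isomorphism P ≅ Hom_C(−, y). -/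
open CategoryTheory CategoryTheory.Limits Opposite

universe v u w

/-- If a Cauchy-complete (finite biproducts + split idempotents) `k`-linear
category `C` carries linear functors `P : Cᵒᵖ ⥤ Vect_k`, `Q : C ⥤ Vect_k` together with
binatural bilinear "counit" maps `ε` and "unit" data `(cᵢ, pᵢ, qᵢ)` satisfying the two
triangle identities, then `P` is representable. -/
theorem statement0
    (k : Type w) [Field k] [IsAlgClosed k]
    (C : Type u) [Category.{v} C] [Preadditive C] [CategoryTheory.Linear k C]
    [HasFiniteBiproducts C] [IsIdempotentComplete C]
    (P : Cᵒᵖ ⥤ ModuleCat.{v} k) [P.Additive]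
    (hPsmul : ∀ {c d : C} (a : k) (f : c ⟶ d), P.map (a • f).op = a • P.map f.op)
    (Q : C ⥤ ModuleCat.{v} k) [Q.Additive] [Q.Linear k]
    (ε : ∀ c c' : C, P.obj (op c) →ₗ[k] Q.obj c' →ₗ[k] (c ⟶ c'))
    (hnat₁ : ∀ (c d c' : C) (f : c ⟶ d) (x : P.obj (op d)) (y : Q.obj c'),
      ε c c' (P.map f.op x) y = f ≫ ε d c' x y)
    (hnat₂ : ∀ (c c' d' : C) (g : c' ⟶ d') (x : P.obj (op c)) (y : Q.obj c'),
      ε c d' x (Q.map g y) = ε c c' x y ≫ g)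
    (n : ℕ) (c : Fin n → C)
    (p : ∀ i, P.obj (op (c i))) (q : ∀ i, Q.obj (c i))
    (htri₁ : ∀ (d : C) (x : P.obj (op d)),
      ∑ i, P.map (ε d (c i) x (q i)).op (p i) = x)
    (htri₂ : ∀ (d : C) (y : Q.obj d),
      ∑ i, Q.map (ε (c i) d (p i) y) (q i) = y) :
    ∃ y : C, Nonempty (P ≅ (linearYoneda k C).obj y) := by
  classical
  set b := biproduct c with hbdef
  set X : P.obj (op b) := ∑ i, P.map (biproduct.π c i).op (p i) with hXdef
  set α : ∀ d : C, P.obj (op d) → (d ⟶ b) :=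
    fun d x => ∑ j, ε d (c j) x (q j) ≫ biproduct.ι c j with hαdef
  set β : ∀ d : C, (d ⟶ b) → P.obj (op d) :=
    fun d f => P.map f.op X with hβdef
  have hβ' : ∀ (d : C) (f : d ⟶ b),
      β d f = ∑ i, P.map (f ≫ biproduct.π c i).op (p i) := by
    intro d f
    simp only [hβdef, hXdef, map_sum]
    congr 1
    funext i
    rw [op_comp, P.map_comp]
    rfl
  -- α x composed with a projection recovers ε
  have hαπ : ∀ (d : C) (x : P.obj (op d)) (i : Fin n),
      α d x ≫ biproduct.π c i = ε d (c i) x (q i) := by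
    intro d x i
    simp only [hαdef, Preadditive.sum_comp, Category.assoc, biproduct.ι_π]
    rw [Finset.sum_eq_single i]
    · simp
    · intro j _ hj
      rw [dif_neg hj]
      simp
    · simp
  have hβα : ∀ (d : C) (x : P.obj (op d)), β d (α d x) = x := by
    intro d x
    rw [hβ' d (α d x)]
    calc (∑ i, P.map (α d x ≫ biproduct.π c i).op (p i))
        = ∑ i, P.map (ε d (c i) x (q i)).op (p i) := by
          congr 1; funext i; rw [hαπ]
      _ = x := htri₁ d x
  have hαnat : ∀ (d d' : C) (f : d ⟶ d') (x : P.obj (op d')),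
      α d (P.map f.op x) = f ≫ α d' x := by
    intro d d' f x
    simp only [hαdef, Preadditive.comp_sum, hnat₁, Category.assoc]
  have hαβ : ∀ (d : C) (f : d ⟶ b), α d (β d f) = f ≫ α b X := by
    intro d f
    exact hαnat d b f X
  set e : b ⟶ b := α b X with hedef
  have he : e ≫ e = e := by
    have h1 : α b (β b e) = e ≫ e := hαβ b e
    have h2 : β b (α b X) = X := hβα b X
    rw [← hedef] at h2
    rw [← h1, h2]
  obtain ⟨y, ι', r, hιr, hrι⟩ := IsIdempotentComplete.idempotents_split b e he
  -- linearity facts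
  have hαadd : ∀ (d : C) (x x' : P.obj (op d)), α d (x + x') = α d x + α d x' := by
    intro d x x'
    simp [hαdef, Preadditive.add_comp, Finset.sum_add_distrib]
  have hαsmul : ∀ (d : C) (a : k) (x : P.obj (op d)), α d (a • x) = a • α d x := by
    intro d a x
    simp [hαdef, Linear.smul_comp, Finset.smul_sum]
  refine ⟨y, ⟨NatIso.ofComponents (fun d => LinearEquiv.toModuleIso
    { toFun := fun x => α d.unop x ≫ r
      map_add' := fun x x' => by rw [hαadd, Preadditive.add_comp]
      map_smul' := fun a x => by rw [hαsmul, Linear.smul_comp]; rfl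
      invFun := fun f => β d.unop (f ≫ ι')
      left_inv := fun x => by
        dsimp only
        have : (α d.unop x ≫ r) ≫ ι' = α d.unop x ≫ e := by
          rw [Category.assoc, hrι]
        rw [this, ← hαβ d.unop (α d.unop x), hβα, hβα]
      right_inv := fun f => by
        dsimp only
        have h1 : α d.unop (β d.unop (f ≫ ι')) = (f ≫ ι') ≫ e := hαβ d.unop _
        have h2 : e ≫ r = r := by
          rw [← hrι, Category.assoc, hιr, Category.comp_id]
        rw [h1, Category.assoc, Category.assoc, h2, hιr, Category.comp_id] })
    ?_⟩⟩
  intro d d' f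
  ext x
  show α d'.unop (P.map f x) ≫ r = f.unop ≫ α d.unop x ≫ r
  have : α d'.unop (P.map f x) = f.unop ≫ α d.unop x := by
    have := hαnat d'.unop d.unop f.unop x
    simpa using this
  rw [this, Category.assoc]
end

section
/- Let C be an abelian category equipped with a k-linear structure whose hom-spaces are finite-dimensional k-vector spaces. Then every object of C is isomorphic to a finite biproduct of simple objects if and only if every object of C is projective. -/
open CategoryTheory CategoryTheory.Limits

attribute [local instance] CategoryTheory.Abelian.hasFiniteBiproducts

universe v u w

section Aux

variable {C : Type u} [Category.{v} C] [Abelian C]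

noncomputable def biprodBiproductIso {m n : ℕ} (f : Fin m → C) (g : Fin n → C) :
    ((⨁ f) ⊞ (⨁ g) : C) ≅ ⨁ (Sum.elim f g : Fin m ⊕ Fin n → C) where
  hom := biprod.desc
    (biproduct.lift fun j => Sum.casesOn (motive := fun j => ((⨁ f : C) ⟶ Sum.elim f g j)) j
        (fun a => biproduct.π f a) (fun b => (0 : (⨁ f : C) ⟶ g b)))
    (biproduct.lift fun j => Sum.casesOn (motive := fun j => ((⨁ g : C) ⟶ Sum.elim f g j)) j
        (fun a => (0 : (⨁ g : C) ⟶ f a)) (fun b => biproduct.π g b))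
  inv := biprod.lift
    (biproduct.desc fun j => Sum.casesOn (motive := fun j => (Sum.elim f g j ⟶ (⨁ f : C))) j
        (fun a => biproduct.ι f a) (fun b => (0 : g b ⟶ (⨁ f : C))))
    (biproduct.desc fun j => Sum.casesOn (motive := fun j => (Sum.elim f g j ⟶ (⨁ g : C))) j
        (fun a => (0 : f a ⟶ (⨁ g : C))) (fun b => biproduct.ι g b))
  hom_inv_id := by
    ext
    all_goals simp [biproduct.lift_desc, Fintype.sum_sum_type, biproduct.total]
  inv_hom_id := by
    ext j j'
    rcases j with a | b <;> rcases j' with a' | b' <;>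
      simp [biproduct.ι_π, -Sum.elim_inl, -Sum.elim_inr, Preadditive.add_comp, Preadditive.comp_add]
    all_goals (erw [biproduct.ι_desc_assoc, biproduct.ι_desc_assoc]; simp [biproduct.ι_π]; abel)

/-- Combine decompositions. -/
noncomputable def biprodAppendIso {m n : ℕ} (f : Fin m → C) (g : Fin n → C) :
    ((⨁ f) ⊞ (⨁ g) : C) ≅ ⨁ (Fin.append f g) :=
  biprodBiproductIso f g ≪≫
    biproduct.whiskerEquiv finSumFinEquiv
      (fun j => eqToIso (by cases j <;> simp [finSumFinEquiv]))

theorem projective_biproduct_fin {n : ℕ} (f : Fin n → C) [∀ i, Projective (f i)] :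
    Projective (⨁ f) where
  factors g e he := ⟨biproduct.desc fun i => Projective.factorThru (biproduct.ι f i ≫ g) e, by
    ext i
    simp [Projective.factorThru_comp]⟩

theorem epi_splits_of_semisimple
    (ss : ∀ X : C, ∃ (n : ℕ) (f : Fin n → C),
        (∀ i, Simple (f i)) ∧ Nonempty (X ≅ ⨁ f))
    {A S : C} [Simple S] (p : A ⟶ S) [Epi p] : ∃ s : S ⟶ A, s ≫ p = 𝟙 S := by
  obtain ⟨n, T, hT, ⟨e⟩⟩ := ss A
  by_cases h : ∃ i, biproduct.ι T i ≫ e.inv ≫ p ≠ 0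
  · obtain ⟨i, hi⟩ := h
    haveI := hT i
    haveI := isIso_of_hom_simple hi
    exact ⟨inv (biproduct.ι T i ≫ e.inv ≫ p) ≫ biproduct.ι T i ≫ e.inv, by simp⟩
  · exfalso
    push_neg at h
    have hp0 : e.inv ≫ p = 0 := by
      apply biproduct.hom_ext'
      intro i
      simpa using h i
    have : p = 0 := by
      have := congrArg (fun q => e.hom ≫ q) hp0
      simpa using this
    have h1 : (𝟙 S : S ⟶ S) = 0 := by
      rw [← cancel_epi p, this]; simp
    exact id_nonzero S h1

theorem projective_of_semisimple
    (ss : ∀ X : C, ∃ (n : ℕ) (f : Fin n → C),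
        (∀ i, Simple (f i)) ∧ Nonempty (X ≅ ⨁ f))
    (X : C) : Projective X := by
  obtain ⟨n, f, hf, ⟨e⟩⟩ := ss X
  haveI : ∀ i, Projective (f i) := by
    intro i
    haveI := hf i
    constructor
    intro E Z g q hq
    obtain ⟨s, hs⟩ := epi_splits_of_semisimple ss (pullback.fst g q)
    exact ⟨s ≫ pullback.snd g q, by rw [Category.assoc, ← pullback.condition,
      ← Category.assoc, hs, Category.id_comp]⟩
  exact Projective.of_iso e.symm (projective_biproduct_fin f)

theorem conj_identities {X Y Q : C} (i : Y ⟶ X) (r : X ⟶ Y) (p : X ⟶ Q) (s : Q ⟶ X)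
    (hir : i ≫ r = 𝟙 Y) (hsp : s ≫ p = 𝟙 Q) (hip : i ≫ p = 0)
    (a : Y ⟶ Y) (b : Q ⟶ Q) :
    i ≫ (r ≫ a ≫ i + p ≫ b ≫ s) ≫ r = a ∧
      s ≫ (r ≫ a ≫ i + p ≫ b ≫ s) ≫ p = b := by
  constructor <;>
    simp [Preadditive.add_comp, Preadditive.comp_add, reassoc_of% hir, reassoc_of% hip,
      reassoc_of% hsp, hir, hip, hsp]

end Aux

section Backward

open Module

variable (k : Type w) [Field k]
variable {C : Type u} [Category.{v} C] [Abelian C] [CategoryTheory.Linear k C]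
variable [∀ X Y : C, FiniteDimensional k (X ⟶ Y)]

theorem decomposition_of_all_projective (hproj : ∀ X : C, Projective X) :
    ∀ (N : ℕ) (X : C), finrank k (X ⟶ X) ≤ N →
      ∃ (n : ℕ) (f : Fin n → C), (∀ i, Simple (f i)) ∧ Nonempty (X ≅ ⨁ f) := by
  intro N
  induction N using Nat.strong_induction_on with
  | _ N ih =>
  intro X hX
  by_cases hz : IsZero X
  · refine ⟨0, Fin.elim0, fun i => i.elim0, ⟨hz.iso ?_⟩⟩
    rw [IsZero.iff_id_eq_zero]
    apply biproduct.hom_ext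
    intro i
    exact i.elim0
  by_cases hs : Simple X
  · exact ⟨1, fun _ => X, fun _ => hs, ⟨(biproductUniqueIso (fun _ : Fin 1 => X)).symm⟩⟩
  -- find a proper nonzero subobject
  have h2 : ¬ ∀ (Y : C) (f : Y ⟶ X) (_ : Mono f), IsIso f ↔ f ≠ 0 :=
    fun h => hs ⟨fun {Y} f hf => h Y f hf⟩
  push_neg at h2
  obtain ⟨Y, i, hmono, hiff⟩ := h2
  haveI := hmono
  have hcase : (IsIso i ∧ i = 0) ∨ (¬ IsIso i ∧ i ≠ 0) := by tauto
  rcases hcase with ⟨hiso, h0⟩ | ⟨hni, h0⟩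
  · exfalso
    apply hz
    rw [IsZero.iff_id_eq_zero]
    obtain ⟨j, hj⟩ := hiso.out
    rw [← hj.2, h0, Limits.comp_zero]
  -- Y and Q := cokernel i are both nonzero
  have hYz : ¬ IsZero Y := fun hY => h0 (hY.eq_of_src i 0)
  set Q := cokernel i with hQdef
  set p : X ⟶ Q := cokernel.π i with hpdef
  have hQz : ¬ IsZero Q := by
    intro hQ
    apply hni
    have : p = 0 := hQ.eq_of_tgt p 0
    haveI : Epi i := Abelian.epi_of_cokernel_π_eq_zero i this
    exact isIso_of_mono_of_epi i
  -- split the short exact sequence Y ⟶ X ⟶ Q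
  obtain ⟨s, hsec⟩ := (hproj Q).factors (𝟙 Q) p
  let S : ShortComplex C := ShortComplex.mk i p (cokernel.condition i)
  have hSexact : S.Exact := ShortComplex.exact_cokernel i
  let sp : S.Splitting := ShortComplex.Splitting.ofExactOfSection S hSexact s hsec hmono
  have hir : i ≫ sp.r = 𝟙 Y := sp.f_r
  have hsp : sp.s ≫ p = 𝟙 Q := sp.s_g
  have hip : i ≫ p = 0 := cokernel.condition i
  -- the dimension count
  let ψ : ((Y ⟶ Y) × (Q ⟶ Q)) →ₗ[k] (X ⟶ X) :=
    { toFun := fun ab => sp.r ≫ ab.1 ≫ i + p ≫ ab.2 ≫ sp.s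
      map_add' := by
        intro ab cd
        simp only [Prod.fst_add, Prod.snd_add, Preadditive.add_comp, Preadditive.comp_add]
        abel
      map_smul' := by
        intro c ab
        simp [Linear.comp_smul, Linear.smul_comp] }
  have hinj : Function.Injective ψ := by
    intro ab cd h
    have h1 := congrArg (fun e => i ≫ e ≫ sp.r) h
    have h2 := congrArg (fun e => sp.s ≫ e ≫ p) h
    simp only [ψ, LinearMap.coe_mk, AddHom.coe_mk,
      (conj_identities i sp.r p sp.s hir hsp hip ab.1 ab.2).1,
      (conj_identities i sp.r p sp.s hir hsp hip ab.1 ab.2).2,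
      (conj_identities i sp.r p sp.s hir hsp hip cd.1 cd.2).1,
      (conj_identities i sp.r p sp.s hir hsp hip cd.1 cd.2).2] at h1 h2
    exact Prod.ext h1 h2
  have hdim : finrank k (Y ⟶ Y) + finrank k (Q ⟶ Q) ≤ finrank k (X ⟶ X) := by
    have := LinearMap.finrank_le_finrank_of_injective hinj
    rwa [Module.finrank_prod] at this
  have hYpos : 0 < finrank k (Y ⟶ Y) := by
    haveI : Nontrivial (Y ⟶ Y) :=
      ⟨⟨𝟙 Y, 0, fun h => hYz ((IsZero.iff_id_eq_zero Y).mpr h)⟩⟩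
    exact Module.finrank_pos
  have hQpos : 0 < finrank k (Q ⟶ Q) := by
    haveI : Nontrivial (Q ⟶ Q) :=
      ⟨⟨𝟙 Q, 0, fun h => hQz ((IsZero.iff_id_eq_zero Q).mpr h)⟩⟩
    exact Module.finrank_pos
  obtain ⟨n₁, f₁, hf₁, ⟨e₁⟩⟩ := ih (finrank k (Y ⟶ Y)) (by omega) Y le_rfl
  obtain ⟨n₂, f₂, hf₂, ⟨e₂⟩⟩ := ih (finrank k (Q ⟶ Q)) (by omega) Q le_rfl
  refine ⟨n₁ + n₂, Fin.append f₁ f₂, ?_, ?_⟩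
  · intro j
    refine j.addCases (fun a => ?_) (fun b => ?_)
    · simpa [Fin.append_left] using hf₁ a
    · simpa [Fin.append_right] using hf₂ b
  · exact ⟨sp.isoBinaryBiproduct ≪≫ biprod.mapIso e₁ e₂ ≪≫ biprodAppendIso f₁ f₂⟩

end Backward

/-- A `k`-linear abelian category with finite-dimensional hom spaces is
semisimple (every object is a finite biproduct of simple objects) if and only if every object
is projective. -/
theorem statement1
    (k : Type w) [Field k] [IsAlgClosed k]
    (C : Type u) [Category.{v} C] [Abelian C] [CategoryTheory.Linear k C]
    [∀ X Y : C, FiniteDimensional k (X ⟶ Y)] :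
    (∀ X : C, ∃ (n : ℕ) (f : Fin n → C),
        (∀ i, Simple (f i)) ∧ Nonempty (X ≅ ⨁ f)) ↔
      (∀ X : C, Projective X) := by
  constructor
  · intro ss X
    exact projective_of_semisimple ss X
  · intro hproj X
    exact decomposition_of_all_projective k hproj (Module.finrank k (X ⟶ X)) X le_rfl
end

section
/- Let C be an abelian category equipped with a k-linear structure whose hom-spaces are finite-dimensional k-vector spaces, and suppose every object of C is projective. Then every object of C has finite length: for every object X, every strictly decreasing chain of subobjects X = X_0 ⊋ X_1 ⊋ ⋯ ⊋ X_m has length m at most dim_k End_C(X); in particular, the poset of subobjects of X admits no infinite strictly descending chain. -/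
open CategoryTheory CategoryTheory.Limits

universe v u w

section Aux

lemma auxNatChain : ∀ (m : ℕ) (f : Fin (m + 1) → ℕ),
    (∀ i : Fin m, f i.castSucc < f i.succ) → m ≤ f (Fin.last m) := by
  intro m
  induction m with
  | zero => intro f _; exact Nat.zero_le _
  | succ m ih =>
    intro f hf
    have h1 := ih (fun i => f i.castSucc) (fun i => hf i.castSucc)
    have h2 := hf (Fin.last m)
    have e1 : (fun i => f i.castSucc) (Fin.last m) = f (Fin.last m).castSucc := rfl
    have e2 : f (Fin.last m).succ = f (Fin.last (m + 1)) := rfl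
    omega

variable {k : Type w} [Field k]
variable {C : Type u} [Category.{v} C] [Abelian C] [CategoryTheory.Linear k C]
variable [∀ X Y : C, FiniteDimensional k (X ⟶ Y)]

/-- The subspace of `End X` of maps factoring through a subobject `Y`. -/
noncomputable def factSub (X : C) (Y : Subobject X) : Submodule k (X ⟶ X) :=
  LinearMap.range (Linear.rightComp k X Y.arrow)

lemma factSub_mono (X : C) {Y Z : Subobject X} (h : Y ≤ Z) :
    factSub (k := k) X Y ≤ factSub (k := k) X Z := by
  rintro f ⟨g, rfl⟩
  exact ⟨g ≫ Subobject.ofLE Y Z h, by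
    simp [Linear.rightComp, Subobject.ofLE_arrow]⟩

lemma factSub_strictMono (hproj : ∀ X : C, Projective X)
    (X : C) {Y Z : Subobject X} (h : Y < Z) :
    factSub (k := k) X Y < factSub (k := k) X Z := by
  refine lt_of_le_of_ne (factSub_mono X h.le) ?_
  intro heq
  -- split the epi onto the cokernel of Z.arrow
  set π := cokernel.π Z.arrow with hπ
  obtain ⟨s, hs⟩ : ∃ s, s ≫ π = 𝟙 _ :=
    ⟨Projective.factorThru (P := cokernel Z.arrow) (𝟙 _) π, Projective.factorThru_comp _ _⟩
  set q : X ⟶ X := 𝟙 X - π ≫ s with hq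
  have hq0 : q ≫ π = 0 := by
    simp [hq, Preadditive.sub_comp, Category.assoc, hs]
  -- q factors through Z
  have hqZ : q ∈ factSub (k := k) X Z :=
    ⟨Abelian.monoLift Z.arrow q hq0, by
      simp [Linear.rightComp, Abelian.monoLift_comp]⟩
  rw [← heq] at hqZ
  obtain ⟨g, hg⟩ := hqZ
  -- but Z.arrow ≫ q = Z.arrow
  have hZq : Z.arrow ≫ q = Z.arrow := by
    simp [hq, Preadditive.comp_sub, hπ]
  have : Z ≤ Y := by
    refine Subobject.le_of_comm (Z.arrow ≫ g) ?_
    have : Z.arrow ≫ g ≫ Y.arrow = Z.arrow := by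
      have := hg
      simp only [Linear.rightComp] at this
      calc Z.arrow ≫ g ≫ Y.arrow = Z.arrow ≫ q := by
            rw [← this]; rfl
        _ = Z.arrow := hZq
    simpa [Category.assoc] using this
  exact absurd this (not_le_of_gt h)

lemma chain_le (hproj : ∀ X : C, Projective X) (X : C) (m : ℕ)
    (g : Fin (m + 1) → Subobject X)
    (hg : ∀ i : Fin m, g i.succ < g i.castSucc) :
    m ≤ Module.finrank k (X ⟶ X) := by
  set F : Fin (m + 1) → ℕ := fun i => Module.finrank k (factSub (k := k) X (g i.rev))
  have hF : ∀ i : Fin m, F i.castSucc < F i.succ := by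
    intro i
    apply Submodule.finrank_lt_finrank_of_lt
    apply factSub_strictMono hproj
    have h1 : (i.castSucc).rev = (i.rev).succ := by
      ext
      simp only [Fin.val_rev, Fin.coe_castSucc, Fin.val_succ]
      omega
    have h2 : (i.succ).rev = (i.rev).castSucc := by
      ext
      simp only [Fin.val_rev, Fin.coe_castSucc, Fin.val_succ]
      omega
    rw [h1, h2]
    exact hg i.rev
  have := auxNatChain m F hF
  calc m ≤ F (Fin.last m) := this
    _ ≤ Module.finrank k (X ⟶ X) := Submodule.finrank_le _

end Aux

/-- In a `k`-linear abelian category with finite-dimensional hom spaces in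
which every object is projective, every object has finite length: any strictly decreasing
chain of subobjects `X = X₀ ⊋ X₁ ⊋ ⋯ ⊋ X_m` has length `m ≤ dim_k End(X)`; in particular
there is no infinite strictly descending chain of subobjects. -/
theorem statement2
    (k : Type w) [Field k] [IsAlgClosed k]
    (C : Type u) [Category.{v} C] [Abelian C] [CategoryTheory.Linear k C]
    [∀ X Y : C, FiniteDimensional k (X ⟶ Y)]
    (hproj : ∀ X : C, Projective X) :
    (∀ (X : C) (m : ℕ) (g : Fin (m + 1) → Subobject X),
        g 0 = ⊤ → (∀ i : Fin m, g i.succ < g i.castSucc) →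
        m ≤ Module.finrank k (X ⟶ X)) ∧
      (∀ (X : C) (f : ℕ → Subobject X), ¬ StrictAnti f) := by
  constructor
  · intro X m g _ hg
    exact chain_le (k := k) hproj X m g hg
  · intro X f hf
    set m := Module.finrank k (X ⟶ X) + 1
    have : m ≤ Module.finrank k (X ⟶ X) := by
      refine chain_le (k := k) hproj X m (fun i => f i) ?_
      intro i
      exact hf (by
        simp only [Fin.coe_castSucc, Fin.val_succ]
        omega)
    omega
end

section
/- Let C be an abelian category equipped with a k-linear structure whose hom-spaces are finite-dimensional k-vector spaces, and suppose every object of C is projective. Then every nonzero object of C contains a simple subobject: for every object X that is not a zero object, there exists a simple object S and a monomorphism S → X. -/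
open CategoryTheory CategoryTheory.Limits

universe v u w

lemma statement4_aux
    (k : Type w) [Field k]
    (C : Type u) [Category.{v} C] [Abelian C] [CategoryTheory.Linear k C]
    [∀ X Y : C, FiniteDimensional k (X ⟶ Y)]
    (hproj : ∀ X : C, Projective X) :
    ∀ (n : ℕ) (X : C), ¬ IsZero X → Module.finrank k (X ⟶ X) ≤ n →
      ∃ (S : C) (f : S ⟶ X), Simple S ∧ Mono f := by
  intro n
  induction n with
  | zero =>
    intro X hX hr
    exfalso
    have h1 : 𝟙 X ≠ 0 := fun h => hX ((IsZero.iff_id_eq_zero X).mpr h)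
    have : Module.finrank k (X ⟶ X) = 0 := Nat.le_zero.mp hr
    rw [Module.finrank_zero_iff] at this
    exact h1 (Subsingleton.elim _ _)
  | succ n ih =>
    intro X hX hr
    by_cases hS : Simple X
    · exact ⟨X, 𝟙 X, hS, inferInstance⟩
    · -- find a proper nonzero subobject
      have hex : ∃ (Y : C) (f : Y ⟶ X), Mono f ∧ f ≠ 0 ∧ ¬ IsIso f := by
        by_contra h
        push_neg at h
        exact hS ⟨fun {Y} f hf => by
          constructor
          · intro hiso hf0
            apply hX
            rw [IsZero.iff_id_eq_zero]
            have h2 := congrArg (fun t => inv f ≫ t) hf0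
            simp only [comp_zero] at h2
            calc 𝟙 X = inv f ≫ f := (IsIso.inv_hom_id f).symm
            _ = 0 := h2
          · intro hne
            by_contra hni
            exact hni (h Y f hf hne)⟩
      obtain ⟨Y, f, hmf, hf0, hfi⟩ := hex
      have : Mono f := hmf
      set Q := cokernel f with hQdef
      set g : X ⟶ Q := cokernel.π f with hgdef
      have hY : ¬ IsZero Y := fun h => hf0 (h.eq_of_src f 0)
      have hQ : ¬ IsZero Q := by
        intro hz
        have : Epi f := Preadditive.epi_of_isZero_cokernel f hz
        exact hfi (isIso_of_mono_of_epi f)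
      -- split the epi g using projectivity of Q
      have : Projective Q := hproj Q
      set s : Q ⟶ X := Projective.factorThru (𝟙 Q) g with hsdef
      have hsg : s ≫ g = 𝟙 Q := Projective.factorThru_comp _ _
      -- retraction of f
      have hcond : (𝟙 X - g ≫ s) ≫ cokernel.π f = 0 := by
        simp [← hgdef, Preadditive.sub_comp, Category.assoc, hsg]
      set r : X ⟶ Y := Abelian.monoLift f (𝟙 X - g ≫ s) hcond with hrdef
      have hrf : r ≫ f = 𝟙 X - g ≫ s := Abelian.monoLift_comp f _ hcond
      have hfg : f ≫ g = 0 := cokernel.condition f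
      have hfr : f ≫ r = 𝟙 Y := by
        rw [← cancel_mono f]
        rw [Category.assoc, hrf]
        simp [Preadditive.comp_sub, reassoc_of% hfg]
      have hsr : s ≫ r = 0 := by
        rw [← cancel_mono f]
        rw [Category.assoc, hrf]
        simp [Preadditive.comp_sub, reassoc_of% hsg]
      -- the injective linear map (Y ⟶ Y) × (Q ⟶ Q) → (X ⟶ X)
      set L : ((Y ⟶ Y) × (Q ⟶ Q)) →ₗ[k] (X ⟶ X) :=
        (((Linear.rightComp k X f).comp (Linear.leftComp k Y r)).coprod
          ((Linear.rightComp k X s).comp (Linear.leftComp k Q g))) with hLdef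
      have hLval : ∀ (u : Y ⟶ Y) (v : Q ⟶ Q), L (u, v) = (r ≫ u) ≫ f + (g ≫ v) ≫ s := by
        intro u v; rfl
      have hker : LinearMap.ker L = ⊥ := by
        rw [LinearMap.ker_eq_bot']
        rintro ⟨u, v⟩ h
        rw [hLval] at h
        have hu : u = 0 := by
          have h2 := congrArg (fun t => f ≫ t ≫ r) h
          simpa [Preadditive.add_comp, Preadditive.comp_add, Category.assoc,
            reassoc_of% hfr, hfr, reassoc_of% hfg, hfg] using h2
        have hv : v = 0 := by
          have h2 := congrArg (fun t => s ≫ t ≫ g) h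
          simpa [Preadditive.add_comp, Preadditive.comp_add, Category.assoc,
            reassoc_of% hsr, hsr, reassoc_of% hsg, hsg, hfg] using h2
        simp [hu, hv]
      have hinj : Function.Injective L := LinearMap.ker_eq_bot.mp hker
      have hle : Module.finrank k ((Y ⟶ Y) × (Q ⟶ Q)) ≤ Module.finrank k (X ⟶ X) :=
        LinearMap.finrank_le_finrank_of_injective hinj
      rw [Module.finrank_prod] at hle
      have hQ1 : 1 ≤ Module.finrank k (Q ⟶ Q) := by
        have : Nontrivial (Q ⟶ Q) :=
          ⟨⟨𝟙 Q, 0, fun h => hQ ((IsZero.iff_id_eq_zero Q).mpr h)⟩⟩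
        exact Module.finrank_pos
      have hYle : Module.finrank k (Y ⟶ Y) ≤ n := by omega
      obtain ⟨S, f', hsimp, hmono⟩ := ih Y hY hYle
      exact ⟨S, f' ≫ f, hsimp, mono_comp f' f⟩

/-- In a `k`-linear abelian category with finite-dimensional hom spaces in
which every object is projective, every nonzero object contains a simple subobject. -/
theorem statement4
    (k : Type w) [Field k] [IsAlgClosed k]
    (C : Type u) [Category.{v} C] [Abelian C] [CategoryTheory.Linear k C]
    [∀ X Y : C, FiniteDimensional k (X ⟶ Y)]
    (hproj : ∀ X : C, Projective X)
    (X : C) (hX : ¬ IsZero X) :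
    ∃ (S : C) (f : S ⟶ X), Simple S ∧ Mono f :=
  statement4_aux k C hproj (Module.finrank k (X ⟶ X)) X hX le_rfl
end

section
/- Let C be an abelian category equipped with a k-linear structure whose hom-spaces are finite-dimensional k-vector spaces. If every object of C is isomorphic to a finite biproduct of simple objects and C has only finitely many isomorphism classes of simple objects, then there exist a finite-dimensional semisimple k-algebra A and a k-linear equivalence of categories between C and the category of finite-dimensional right A-modules. -/
open CategoryTheory CategoryTheory.Limits

attribute [local instance] CategoryTheory.Abelian.hasFiniteBiproducts

universe v u

/-- The category of finitely generated (equivalently, finite-dimensional) modules over a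
`k`-algebra is a `k`-linear category. -/
noncomputable instance fgModuleCatLinear (k : Type v) [Field k]
    (A : Type v) [Ring A] [Algebra k A] :
    CategoryTheory.Linear k (FGModuleCat.{v} A) := by
  dsimp [FGModuleCat]; infer_instance

set_option linter.unusedSectionVars false

open MulOpposite

section
variable {C : Type u} [Category.{v} C] [Preadditive C]

instance homModuleOp (P X : C) : Module (End P)ᵐᵒᵖ (P ⟶ X) where
  smul a x := a.unop ≫ x
  one_smul x := Category.id_comp x
  mul_smul a b x := by
    show ((a * b).unop : P ⟶ P) ≫ x = a.unop ≫ b.unop ≫ x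
    rw [MulOpposite.unop_mul, End.mul_def, Category.assoc]
  smul_zero a := Limits.comp_zero
  smul_add a x y := Preadditive.comp_add _ _ _ _ _ _
  add_smul a b x := by
    show ((a + b).unop : P ⟶ P) ≫ x = a.unop ≫ x + b.unop ≫ x
    rw [MulOpposite.unop_add]; exact Preadditive.add_comp _ _ _ _ _ _
  zero_smul x := by
    show ((0 : (End P)ᵐᵒᵖ).unop : P ⟶ P) ≫ x = 0
    rw [MulOpposite.unop_zero]; exact Limits.zero_comp

lemma op_smul_hom_def {P X : C} (a : End P) (x : P ⟶ X) :
    (op a) • x = (a : P ⟶ P) ≫ x := rfl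

lemma smul_hom_def {P X : C} (a : (End P)ᵐᵒᵖ) (x : P ⟶ X) :
    a • x = (a.unop : P ⟶ P) ≫ x := rfl

lemma endRight_smul_def {P X : C} (a : End P) (x : X ⟶ P) :
    a • x = x ≫ (a : P ⟶ P) := rfl
end


theorem IsSimpleModule.isSemisimpleModule' {R M : Type*} [Ring R] [AddCommGroup M] [Module R M]
    [IsSimpleModule R M] : IsSemisimpleModule R M :=
  { toComplementedLattice := ⟨fun a => (eq_bot_or_eq_top a).elim (fun h => ⟨⊤, h ▸ isCompl_bot_top⟩)
    (fun h => ⟨⊥, h ▸ isCompl_top_bot⟩)⟩ }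

theorem isSemisimpleModule_pi {R : Type*} [Ring R] {ι : Type*} [Finite ι] [DecidableEq ι]
    (M : ι → Type*) [∀ i, AddCommGroup (M i)] [∀ i, Module R (M i)]
    [∀ i, IsSimpleModule R (M i)] : IsSemisimpleModule R (∀ i, M i) := by
  refine isSemisimpleModule_of_isSemisimpleModule_submodule'
    (p := fun i => LinearMap.range (LinearMap.single R M i)) (fun i => ?_)
    (LinearMap.iSup_range_single R M)
  have h1 : IsSimpleModule R (LinearMap.range (LinearMap.single R M i)) :=
    IsSimpleModule.congr (LinearEquiv.ofInjective (LinearMap.single R M i)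
      (Pi.single_injective (M := M) i)).symm
  exact IsSimpleModule.isSemisimpleModule'

section Simples
variable {C : Type u} [Category.{v} C] [Abelian C]
variable {ι : Type*} [Fintype ι] [DecidableEq ι] (s : ι → C) [∀ i, Simple (s i)]

attribute [local instance] CategoryTheory.Abelian.hasFiniteBiproducts

lemma isSimpleModule_homInto (i : ι) :
    IsSimpleModule (End (⨁ s)) ((s i) ⟶ ⨁ s) := by
  haveI : Nontrivial ((s i) ⟶ ⨁ s) := by
    refine ⟨biproduct.ι s i, 0, fun h => id_nonzero (s i) ?_⟩
    rw [← biproduct.ι_π_self s i, h, Limits.zero_comp]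
  refine { eq_bot_or_eq_top := fun W => ?_ }
  rcases eq_or_ne W ⊥ with h | h
  · exact Or.inl h
  · refine Or.inr (eq_top_iff.mpr fun y _ => ?_)
    obtain ⟨x, hxW, hx⟩ := Submodule.exists_mem_ne_zero_of_ne_bot h
    obtain ⟨j, hj⟩ : ∃ j, x ≫ biproduct.π s j ≠ 0 := by
      by_contra hc
      push_neg at hc
      exact hx (biproduct.hom_ext _ _ fun j => by rw [hc j, Limits.zero_comp])
    haveI := isIso_of_hom_simple hj
    have : (show End (⨁ s) from biproduct.π s j ≫ inv (x ≫ biproduct.π s j) ≫ y) • x = y := by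
      show x ≫ (biproduct.π s j ≫ inv (x ≫ biproduct.π s j) ≫ y) = y
      rw [← Category.assoc, IsIso.hom_inv_id_assoc]
    exact this ▸ W.smul_mem _ hxW

lemma isSimpleModule_homFrom (i : ι) :
    IsSimpleModule (End (⨁ s))ᵐᵒᵖ ((⨁ s) ⟶ s i) := by
  haveI : Nontrivial ((⨁ s) ⟶ s i) := by
    refine ⟨biproduct.π s i, 0, fun h => id_nonzero (s i) ?_⟩
    rw [← biproduct.ι_π_self s i, h, Limits.comp_zero]
  refine { eq_bot_or_eq_top := fun W => ?_ }
  rcases eq_or_ne W ⊥ with h | h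
  · exact Or.inl h
  · refine Or.inr (eq_top_iff.mpr fun y _ => ?_)
    obtain ⟨x, hxW, hx⟩ := Submodule.exists_mem_ne_zero_of_ne_bot h
    obtain ⟨j, hj⟩ : ∃ j, biproduct.ι s j ≫ x ≠ 0 := by
      by_contra hc
      push_neg at hc
      exact hx (biproduct.hom_ext' _ _ fun j => by rw [hc j, Limits.comp_zero])
    haveI := isIso_of_hom_simple hj
    have : (op (show End (⨁ s) from y ≫ inv (biproduct.ι s j ≫ x) ≫ biproduct.ι s j)) • x = y := by
      show (y ≫ inv (biproduct.ι s j ≫ x) ≫ biproduct.ι s j) ≫ x = y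
      simp only [Category.assoc, IsIso.inv_hom_id, Category.comp_id]
    exact this ▸ W.smul_mem _ hxW

lemma isSemisimpleRing_end : IsSemisimpleRing (End (⨁ s)) := by
  haveI := fun i => isSimpleModule_homInto s i
  haveI : IsSemisimpleModule (End (⨁ s)) (∀ i, ((s i) ⟶ ⨁ s)) := isSemisimpleModule_pi _
  let E : (End (⨁ s)) ≃ₗ[End (⨁ s)] (∀ i, ((s i) ⟶ ⨁ s)) :=
  { toFun := fun x i => biproduct.ι s i ≫ x
    map_add' := fun x y => by
      funext i
      show biproduct.ι s i ≫ (x + y) = biproduct.ι s i ≫ x + biproduct.ι s i ≫ y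
      exact Preadditive.comp_add _ _ _ _ _ _
    map_smul' := fun a x => by
      funext i
      show biproduct.ι s i ≫ (a • x : End (⨁ s)) = (biproduct.ι s i ≫ x) ≫ a
      rw [smul_eq_mul, End.mul_def, ← Category.assoc]
    invFun := fun v => show End (⨁ s) from biproduct.desc v
    left_inv := fun x => by
      show biproduct.desc (fun i => biproduct.ι s i ≫ x) = x
      exact biproduct.hom_ext' _ _ fun j => by simp
    right_inv := fun v => by
      funext i
      show biproduct.ι s i ≫ biproduct.desc v = v i
      simp }
  exact IsSemisimpleModule.congr E

lemma isSemisimpleRing_endOp : IsSemisimpleRing (End (⨁ s))ᵐᵒᵖ := by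
  haveI := fun i => isSimpleModule_homFrom s i
  haveI : IsSemisimpleModule (End (⨁ s))ᵐᵒᵖ (∀ i, ((⨁ s) ⟶ s i)) := isSemisimpleModule_pi _
  let E : (End (⨁ s))ᵐᵒᵖ ≃ₗ[(End (⨁ s))ᵐᵒᵖ] (∀ i, ((⨁ s) ⟶ s i)) :=
  { toFun := fun a i => (a.unop : (⨁ s) ⟶ (⨁ s)) ≫ biproduct.π s i
    map_add' := fun a b => by
      funext i
      show ((a + b).unop : (⨁ s) ⟶ (⨁ s)) ≫ _ = (a.unop : (⨁ s) ⟶ (⨁ s)) ≫ _ + (b.unop : (⨁ s) ⟶ (⨁ s)) ≫ _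
      rw [MulOpposite.unop_add]
      exact Preadditive.add_comp _ _ _ _ _ _
    map_smul' := fun b a => by
      funext i
      show ((b * a).unop : (⨁ s) ⟶ (⨁ s)) ≫ biproduct.π s i
          = (b.unop : (⨁ s) ⟶ (⨁ s)) ≫ ((a.unop : (⨁ s) ⟶ (⨁ s)) ≫ biproduct.π s i)
      rw [MulOpposite.unop_mul, End.mul_def, Category.assoc]
    invFun := fun v => op (show End (⨁ s) from biproduct.lift v)
    left_inv := fun a => by
      apply unop_injective
      show biproduct.lift (fun i => (a.unop : (⨁ s) ⟶ (⨁ s)) ≫ biproduct.π s i) = a.unop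
      exact biproduct.hom_ext _ _ fun j => by simp
    right_inv := fun v => by
      funext i
      show (show End (⨁ s) from biproduct.lift v) ≫ biproduct.π s i = v i
      simp }
  exact IsSemisimpleModule.congr E

end Simples

section Functor
variable {C : Type u} [Category.{v} C] [Abelian C]
attribute [local instance] CategoryTheory.Abelian.hasFiniteBiproducts

/-- The `Hom(P, -)` functor into finite-dimensional modules over `(End P)ᵐᵒᵖ`. -/
noncomputable def homFunctor (P : C) [∀ X : C, Module.Finite (End P)ᵐᵒᵖ (P ⟶ X)] :
    C ⥤ FGModuleCat.{v} (End P)ᵐᵒᵖ where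
  obj X := FGModuleCat.of _ (P ⟶ X)
  map {X Y} f :=
    FGModuleCat.ofHom
    { toFun := fun x => x ≫ f
      map_add' := fun x y => Preadditive.add_comp _ _ _ _ _ _
      map_smul' := fun a x => Category.assoc _ _ _ }
  map_id X := by
    apply FGModuleCat.hom_ext; apply LinearMap.ext; intro x
    exact Category.comp_id x
  map_comp f g := by
    apply FGModuleCat.hom_ext; apply LinearMap.ext; intro x
    exact (Category.assoc x f g).symm

lemma homFunctor_map_apply (P : C) [∀ X : C, Module.Finite (End P)ᵐᵒᵖ (P ⟶ X)]
    {X Y : C} (f : X ⟶ Y) (x : P ⟶ X) : ((homFunctor P).map f) x = x ≫ f := rfl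

lemma homFunctor_faithful (P : C) [∀ X : C, Module.Finite (End P)ᵐᵒᵖ (P ⟶ X)]
    (h : ∀ X : C, ∃ (m : ℕ) (r : Fin m → (X ⟶ P)) (u : Fin m → (P ⟶ X)),
      (∑ j, r j ≫ u j) = 𝟙 X) : (homFunctor P).Faithful := by
  refine ⟨fun {X Y} {f f'} hf => ?_⟩
  obtain ⟨m, r, u, hru⟩ := h X
  have key : ∀ g : X ⟶ Y, g = ∑ j, r j ≫ (u j ≫ g) := fun g => by
    conv_lhs => rw [← Category.id_comp g, ← hru, Preadditive.sum_comp]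
    simp only [Category.assoc]
  rw [key f, key f']
  congr 1
  funext j
  have : u j ≫ f = u j ≫ f' := by
    have := congrArg (fun (ψ : (homFunctor P).obj X ⟶ (homFunctor P).obj Y) => ψ (u j)) hf
    exact this
  rw [this]

lemma homFunctor_full (P : C) [∀ X : C, Module.Finite (End P)ᵐᵒᵖ (P ⟶ X)]
    (h : ∀ X : C, ∃ (m : ℕ) (r : Fin m → (X ⟶ P)) (u : Fin m → (P ⟶ X)),
      (∑ j, r j ≫ u j) = 𝟙 X) : (homFunctor P).Full := by
  refine ⟨fun {X Y} φ => ?_⟩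
  obtain ⟨m, r, u, hru⟩ := h X
  let φ' : (P ⟶ X) →ₗ[(End P)ᵐᵒᵖ] (P ⟶ Y) := φ.hom.hom
  refine ⟨∑ j, r j ≫ φ' (u j), ?_⟩
  apply FGModuleCat.hom_ext; apply LinearMap.ext; intro (g : P ⟶ X)
  show g ≫ (∑ j, r j ≫ φ' (u j)) = φ' g
  rw [Preadditive.comp_sum]
  have step : ∀ j, g ≫ r j ≫ φ' (u j) = φ' ((g ≫ r j) ≫ u j) := fun j => by
    have h1 : (op (show End P from g ≫ r j)) • (u j) = (g ≫ r j) ≫ u j := rfl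
    rw [← h1, map_smul, op_smul_hom_def]
    exact (Category.assoc _ _ _).symm
  calc ∑ j, g ≫ r j ≫ φ' (u j) = ∑ j, φ' ((g ≫ r j) ≫ u j) := by
        exact Finset.sum_congr rfl fun j _ => step j
    _ = φ' (∑ j, (g ≫ r j) ≫ u j) := (map_sum φ' _ _).symm
    _ = φ' (g ≫ ∑ j, r j ≫ u j) := by
        rw [Preadditive.comp_sum]; simp only [Category.assoc]
    _ = φ' g := by rw [hru, Category.comp_id]

lemma homFunctor_essSurj (P : C) [∀ X : C, Module.Finite (End P)ᵐᵒᵖ (P ⟶ X)]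
    [IsSemisimpleRing (End P)ᵐᵒᵖ] [(homFunctor P).Full] [(homFunctor P).Faithful] :
    (homFunctor P).EssSurj := by
  constructor
  intro M
  obtain ⟨m, ψ, hψ⟩ := Module.Finite.exists_fin' ((End P)ᵐᵒᵖ) M
  obtain ⟨N, hN⟩ := ComplementedLattice.exists_isCompl (LinearMap.ker ψ)
  let eN : N ≃ₗ[(End P)ᵐᵒᵖ] M :=
    (Submodule.quotientEquivOfIsCompl (LinearMap.ker ψ) N hN).symm.trans
      (LinearMap.quotKerEquivOfSurjective ψ hψ)
  let i : M →ₗ[(End P)ᵐᵒᵖ] (Fin m → (End P)ᵐᵒᵖ) := N.subtype ∘ₗ eN.symm.toLinearMap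
  let pr : (Fin m → (End P)ᵐᵒᵖ) →ₗ[(End P)ᵐᵒᵖ] M :=
    eN.toLinearMap ∘ₗ (N.projectionOnto (LinearMap.ker ψ) hN.symm)
  have hpi : ∀ x : M, pr (i x) = x := fun x => by
    show eN (N.projectionOnto (LinearMap.ker ψ) hN.symm (eN.symm x : _)) = x
    rw [Submodule.projectionOnto_apply_left, LinearEquiv.apply_symm_apply]
  let Q : C := ⨁ (fun _ : Fin m => P)
  let β : (P ⟶ Q) ≃ₗ[(End P)ᵐᵒᵖ] (Fin m → (End P)ᵐᵒᵖ) :=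
  { toFun := fun x j => op (show End P from x ≫ biproduct.π _ j)
    map_add' := fun x y => by
      funext j
      show op (show End P from (x + y) ≫ biproduct.π _ j) = _
      rw [Preadditive.add_comp]
      exact MulOpposite.op_add _ _
    map_smul' := fun a x => by
      funext j
      apply MulOpposite.unop_injective
      show ((a.unop : P ⟶ P) ≫ x) ≫ biproduct.π _ j = (a.unop : P ⟶ P) ≫ (x ≫ biproduct.π _ j)
      exact Category.assoc _ _ _
    invFun := fun v => biproduct.lift (fun j => ((v j).unop : P ⟶ P))
    left_inv := fun x => by
      apply biproduct.hom_ext; intro j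
      simp
    right_inv := fun v => by
      funext j
      show op (show End P from biproduct.lift (fun j => ((v j).unop : P ⟶ P)) ≫ biproduct.π _ j) = v j
      rw [biproduct.lift_π]
      exact MulOpposite.op_unop _ }
  let e : (Fin m → (End P)ᵐᵒᵖ) →ₗ[(End P)ᵐᵒᵖ] (Fin m → (End P)ᵐᵒᵖ) := i ∘ₗ pr
  let τ : (P ⟶ Q) →ₗ[(End P)ᵐᵒᵖ] (P ⟶ Q) := β.symm.toLinearMap ∘ₗ e ∘ₗ β.toLinearMap
  obtain ⟨eQ, heQ⟩ := (homFunctor P).map_surjective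
    (show (homFunctor P).obj Q ⟶ (homFunctor P).obj Q from FGModuleCat.ofHom τ)
  have heQap : ∀ g : P ⟶ Q, g ≫ eQ = τ g := fun g => by
    have := congrArg (fun (χ : (homFunctor P).obj Q ⟶ (homFunctor P).obj Q) => χ g) heQ
    exact this
  have hee : ∀ w, e (e w) = e w := fun w => by
    show i (pr (i (pr w))) = i (pr w)
    rw [hpi]
  have hidem : eQ ≫ eQ = eQ := by
    apply (homFunctor P).map_injective
    rw [Functor.map_comp, heQ]
    apply FGModuleCat.hom_ext; apply LinearMap.ext; intro g
    show τ (τ g) = τ g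
    show β.symm (e (β (β.symm (e (β g))))) = β.symm (e (β g))
    rw [LinearEquiv.apply_symm_apply, hee]
  obtain ⟨Y, iY, eY, h1, h2⟩ := IsIdempotentComplete.idempotents_split Q eQ hidem
  refine ⟨Y, ⟨?_⟩⟩
  have hτap : ∀ g : P ⟶ Q, β (g ≫ eQ) = e (β g) := fun g => by
    rw [heQap]
    show β (β.symm (e (β g))) = e (β g)
    rw [LinearEquiv.apply_symm_apply]
  let γlin : (P ⟶ Y) →ₗ[(End P)ᵐᵒᵖ] M :=
    pr ∘ₗ β.toLinearMap ∘ₗ (show ((homFunctor P).obj Y ⟶ (homFunctor P).obj Q) from (homFunctor P).map iY).hom.hom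
  let γinv : M →ₗ[(End P)ᵐᵒᵖ] (P ⟶ Y) :=
    (show ((homFunctor P).obj Q ⟶ (homFunctor P).obj Y) from (homFunctor P).map eY).hom.hom ∘ₗ β.symm.toLinearMap ∘ₗ i
  have hfwd : ∀ x : M, γlin (γinv x) = x := fun x => by
    show pr (β ((β.symm (i x) ≫ eY) ≫ iY)) = x
    rw [Category.assoc, h2, hτap, LinearEquiv.apply_symm_apply]
    show pr (i (pr (i x))) = x
    rw [hpi, hpi]
  have hbwd : ∀ y : P ⟶ Y, γinv (γlin y) = y := fun y => by
    show (β.symm (i (pr (β (y ≫ iY))))) ≫ eY = y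
    have : (i (pr (β (y ≫ iY)))) = e (β (y ≫ iY)) := rfl
    rw [this, ← hτap, LinearEquiv.symm_apply_apply]
    have hiY : iY ≫ eQ = iY := by rw [← h2, ← Category.assoc, h1, Category.id_comp]
    rw [Category.assoc y iY eQ, hiY, Category.assoc, h1, Category.comp_id]
  exact
  { hom := show ((homFunctor P).obj Y ⟶ M) from FGModuleCat.ofHom γlin
    inv := show (M ⟶ (homFunctor P).obj Y) from FGModuleCat.ofHom γinv
    hom_inv_id := FGModuleCat.hom_ext (LinearMap.ext fun y => hbwd y)
    inv_hom_id := FGModuleCat.hom_ext (LinearMap.ext fun x => hfwd x) }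
end Functor

section Finiteness
variable (k : Type v) [Field k] {C : Type u} [Category.{v} C] [Abelian C]
  [CategoryTheory.Linear k C] [∀ X Y : C, FiniteDimensional k (X ⟶ Y)]

include k in
lemma moduleFinite_hom (P X : C) : Module.Finite (End P)ᵐᵒᵖ (P ⟶ X) := by
  letI : IsScalarTower k (End P)ᵐᵒᵖ (P ⟶ X) := ⟨fun c a x => by
    show ((c • a).unop : P ⟶ P) ≫ x = c • ((a.unop : P ⟶ P) ≫ x)
    rw [MulOpposite.unop_smul]
    exact Linear.smul_comp _ _ _ c (a.unop : P ⟶ P) x⟩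
  exact Module.Finite.of_restrictScalars_finite k _ _
end Finiteness



/-- A semisimple `k`-linear abelian category with finite-dimensional hom
spaces and finitely many isomorphism classes of simple objects is `k`-linearly equivalent to
the category of finite-dimensional right modules over a finite-dimensional semisimple
`k`-algebra `A`. -/
theorem statement7
    (k : Type v) [Field k] [IsAlgClosed k]
    (C : Type u) [Category.{v} C] [Abelian C] [CategoryTheory.Linear k C]
    [∀ X Y : C, FiniteDimensional k (X ⟶ Y)]
    (hss : ∀ X : C, ∃ (n : ℕ) (f : Fin n → C),
      (∀ i, Simple (f i)) ∧ Nonempty (X ≅ ⨁ f))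
    (hfin : ∃ (n : ℕ) (s : Fin n → C), ∀ S : C, Simple S → ∃ i, Nonempty (S ≅ s i)) :
    ∃ A : AlgCat.{v} k, FiniteDimensional k A ∧ IsSemisimpleRing A ∧
      ∃ F : C ⥤ FGModuleCat.{v} (↑A)ᵐᵒᵖ, F.IsEquivalence ∧
        (∀ (X Y : C) (f g : X ⟶ Y), F.map (f + g) = F.map f + F.map g) ∧
        (∀ (X Y : C) (a : k) (f : X ⟶ Y), F.map (a • f) = a • F.map f) := by
  classical
  obtain ⟨n, s0, hrep⟩ := hfin
  let ι := {i : Fin n // Simple (s0 i)}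
  let s : ι → C := fun i => s0 i.1
  haveI hsimp : ∀ i : ι, Simple (s i) := fun i => i.2
  let P : C := ⨁ s
  have key : ∀ X : C, ∃ (m : ℕ) (r : Fin m → (X ⟶ P)) (u : Fin m → (P ⟶ X)),
      (∑ j, r j ≫ u j) = 𝟙 X := by
    intro X
    obtain ⟨m, f, hf, ⟨eiso⟩⟩ := hss X
    have hc : ∀ j : Fin m, ∃ i : ι, Nonempty (f j ≅ s i) := by
      intro j
      haveI := hf j
      obtain ⟨i0, ⟨e0⟩⟩ := hrep (f j) (hf j)
      exact ⟨⟨i0, Simple.of_iso e0.symm⟩, ⟨e0⟩⟩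
    choose c ec using hc
    let e : ∀ j, f j ≅ s (c j) := fun j => (ec j).some
    refine ⟨m, fun j => eiso.hom ≫ biproduct.π f j ≫ (e j).hom ≫ biproduct.ι s (c j),
            fun j => biproduct.π s (c j) ≫ (e j).inv ≫ biproduct.ι f j ≫ eiso.inv, ?_⟩
    have hterm : ∀ j : Fin m,
        (eiso.hom ≫ biproduct.π f j ≫ (e j).hom ≫ biproduct.ι s (c j)) ≫
          (biproduct.π s (c j) ≫ (e j).inv ≫ biproduct.ι f j ≫ eiso.inv)
        = eiso.hom ≫ ((biproduct.π f j ≫ biproduct.ι f j) ≫ eiso.inv) := fun j => by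
      simp
    rw [Finset.sum_congr rfl fun j _ => hterm j, ← Preadditive.comp_sum, ← Preadditive.sum_comp,
      biproduct.total]
    simp
  haveI hMF : ∀ X : C, Module.Finite (End P)ᵐᵒᵖ (P ⟶ X) := fun X => moduleFinite_hom k P X
  haveI hFull : (homFunctor P).Full := homFunctor_full P key
  haveI hFaithful : (homFunctor P).Faithful := homFunctor_faithful P key
  haveI hssOp : IsSemisimpleRing (End P)ᵐᵒᵖ := isSemisimpleRing_endOp s
  haveI hEss : (homFunctor P).EssSurj := homFunctor_essSurj P
  refine ⟨AlgCat.of k (End P), ?_, ?_, homFunctor P, ?_, ?_, ?_⟩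
  · show FiniteDimensional k (End P)
    let eqv : (P ⟶ P) ≃ₗ[k] (End P) :=
      { toFun := fun x => x, invFun := fun x => x, map_add' := fun _ _ => rfl,
        map_smul' := fun _ _ => rfl, left_inv := fun _ => rfl, right_inv := fun _ => rfl }
    exact Module.Finite.equiv eqv
  · exact isSemisimpleRing_end s
  · exact {}
  · intro X Y f g
    apply FGModuleCat.hom_ext; apply LinearMap.ext; intro x
    show x ≫ (f + g) = x ≫ f + x ≫ g
    exact Preadditive.comp_add _ _ _ _ _ _
  · intro X Y a f
    apply FGModuleCat.hom_ext; apply LinearMap.ext; intro (x : P ⟶ X)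
    have e1 : ((algebraMap k ((End P)ᵐᵒᵖ) a).unop : P ⟶ P) = a • 𝟙 P := by
      rw [MulOpposite.algebraMap_apply, unop_op, Algebra.algebraMap_eq_smul_one]
      rfl
    show x ≫ (a • f) = ((algebraMap k ((End P)ᵐᵒᵖ) a).unop : P ⟶ P) ≫ (x ≫ f)
    rw [e1, Linear.smul_comp, Category.id_comp, Linear.comp_smul]
end

section
/- Let C be a k-linear monoidal category with finite biproducts and a zero object, whose tensor product is additive and k-linear in each variable. Suppose the tensor unit I decomposes as a finite biproduct I ≅ ⊕_{j ∈ J} I_j with each I_j a simple object. Then for every simple object X of C there is exactly one index j_X ∈ J such that X ⊗ I_{j_X} is not a zero object, and for this index X ⊗ I_{j_X} ≅ X; for every other j ≠ j_X, X ⊗ I_j is a zero object. -/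
open CategoryTheory CategoryTheory.Limits MonoidalCategory

universe v u w

/-- **Statement 10.** In a `k`-linear monoidal category with finite biproducts and a zero
object whose tensor unit decomposes as a finite biproduct of simple objects `I_j`, every
simple object `X` is preserved by exactly one factor: there is exactly one index `j₀` with
`X ⊗ I_{j₀}` nonzero, for this index `X ⊗ I_{j₀} ≅ X`, and `X ⊗ I_j` is zero for `j ≠ j₀`. -/
theorem statement10
    (k : Type w) [Field k] [IsAlgClosed k]
    (C : Type u) [Category.{v} C] [Preadditive C] [CategoryTheory.Linear k C]
    [MonoidalCategory C] [MonoidalPreadditive C] [MonoidalLinear k C]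
    [HasFiniteBiproducts C] [HasZeroObject C]
    (n : ℕ) (I' : Fin n → C) (hI : ∀ j, Simple (I' j))
    (e : 𝟙_ C ≅ ⨁ I') :
    ∀ X : C, Simple X →
      ∃ j₀ : Fin n, ¬ IsZero (X ⊗ I' j₀) ∧ Nonempty (X ⊗ I' j₀ ≅ X) ∧
        ∀ j : Fin n, j ≠ j₀ → IsZero (X ⊗ I' j) := by
  intro X hX
  haveI := hX
  set Y : Fin n → C := fun j => X ⊗ I' j with hY
  let h : X ≅ ⨁ Y := (ρ_ X).symm ≪≫ whiskerLeftIso X e ≪≫ leftDistributor X I'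
  let f : ∀ j, X ⟶ Y j := fun j => h.hom ≫ biproduct.π Y j
  let g : ∀ j, Y j ⟶ X := fun j => biproduct.ι Y j ≫ h.inv
  have hgf : ∀ j, g j ≫ f j = 𝟙 (Y j) := by
    intro j
    simp [f, g]
  have hcross : ∀ j j', j ≠ j' → g j ≫ f j' = 0 := by
    intro j j' hne
    simp [f, g, biproduct.ι_π, hne]
  have htotal : ∑ j, f j ≫ g j = 𝟙 X := by
    have : ∑ j, f j ≫ g j = h.hom ≫ (∑ j, biproduct.π Y j ≫ biproduct.ι Y j) ≫ h.inv := by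
      rw [Preadditive.sum_comp, Preadditive.comp_sum]
      simp [f, g]
    rw [this, biproduct.total]
    simp
  -- each g j is a split mono
  haveI : ∀ j, IsSplitMono (g j) := fun j => IsSplitMono.mk' ⟨f j, hgf j⟩
  have key : ∀ j, IsIso (g j) ∨ IsZero (Y j) := by
    intro j
    by_cases hz : g j = 0
    · right
      rw [IsZero.iff_id_eq_zero, ← hgf j, hz, Limits.zero_comp]
    · left
      exact isIso_of_mono_of_nonzero hz
  -- f j ≫ g j = 𝟙 X when g j is iso
  have hiso_total : ∀ j, IsIso (g j) → f j ≫ g j = 𝟙 X := by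
    intro j hj
    haveI := hj
    rw [← cancel_epi (g j), ← Category.assoc, hgf j, Category.id_comp, Category.comp_id]
  -- at least one j with g j iso
  have hex : ∃ j₀, IsIso (g j₀) := by
    by_contra hc
    push_neg at hc
    have hz : ∀ j, g j = 0 := by
      intro j
      rcases key j with hi | hzero
      · exact absurd hi (hc j)
      · exact hzero.eq_zero_of_src (g j)
    have : (𝟙 X : X ⟶ X) = 0 := by
      rw [← htotal]
      apply Finset.sum_eq_zero
      intro j _
      rw [hz j, Limits.comp_zero]
    exact id_nonzero X this
  obtain ⟨j₀, hj₀⟩ := hex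
  haveI := hj₀
  refine ⟨j₀, ?_, ⟨asIso (g j₀)⟩, ?_⟩
  · intro hzero
    exact id_nonzero X ((IsZero.iff_id_eq_zero X).mp (hzero.of_iso (asIso (g j₀)).symm))
  · intro j hne
    rcases key j with hi | hzero
    · exfalso
      have h1 := hiso_total j hi
      have h2 := hiso_total j₀ hj₀
      have : (𝟙 X : X ⟶ X) = 0 := by
        calc (𝟙 X : X ⟶ X) = (f j ≫ g j) ≫ (f j₀ ≫ g j₀) := by rw [h1, h2, Category.id_comp]
        _ = f j ≫ (g j ≫ f j₀) ≫ g j₀ := by simp only [Category.assoc]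
        _ = 0 := by rw [hcross j j₀ hne, Limits.zero_comp, Limits.comp_zero]
      exact id_nonzero X this
    · exact hzero
end

section
/- Let C be a braided k-linear monoidal category with finite biproducts and a zero object, whose tensor product is additive and k-linear in each variable, and suppose the tensor unit I decomposes as a finite biproduct I ≅ ⊕_{j ∈ J} I_j with each I_j a simple object. For a simple object X let j_X denote the unique index with X ⊗ I_{j_X} not a zero object (so X ⊗ I_{j_X} ≅ X). Then: (a) j_X is also the unique index j with I_j ⊗ X not a zero object, and I_{j_X} ⊗ X ≅ X; (b) if X and Y are simple objects with j_X ≠ j_Y, then X ⊗ Y is a zero object. -/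
open CategoryTheory CategoryTheory.Limits MonoidalCategory

universe v u w

lemma aux_zero_tensor {C : Type u} [Category.{v} C] [Preadditive C]
    [MonoidalCategory C] [MonoidalPreadditive C] {Z : C} (h : IsZero Z) (Y : C) :
    IsZero (Z ⊗ Y) := by
  rw [IsZero.iff_id_eq_zero] at h ⊢
  rw [← id_tensorHom_id, h, MonoidalPreadditive.zero_tensor]

/-- **Statement 11.** In a braided `k`-linear monoidal category with finite biproducts and a
zero object whose tensor unit decomposes as a finite biproduct of simple objects `I_j`, for a
simple object `X` with distinguished index `j_X` (the unique index with `X ⊗ I_{j_X}`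
nonzero): (a) `j_X` is also the unique index `j` with `I_j ⊗ X` nonzero, and
`I_{j_X} ⊗ X ≅ X`; (b) two simple objects belonging to different factors tensor to zero. -/
theorem statement11
    (k : Type w) [Field k] [IsAlgClosed k]
    (C : Type u) [Category.{v} C] [Preadditive C] [CategoryTheory.Linear k C]
    [MonoidalCategory C] [MonoidalPreadditive C] [MonoidalLinear k C] [BraidedCategory C]
    [HasFiniteBiproducts C] [HasZeroObject C]
    (n : ℕ) (I' : Fin n → C) (hI : ∀ j, Simple (I' j))
    (e : 𝟙_ C ≅ ⨁ I') :
    (∀ X : C, Simple X → ∀ jX : Fin n, ¬ IsZero (X ⊗ I' jX) →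
      (¬ IsZero (I' jX ⊗ X) ∧ Nonempty (I' jX ⊗ X ≅ X) ∧
        ∀ j : Fin n, j ≠ jX → IsZero (I' j ⊗ X))) ∧
    (∀ X Y : C, Simple X → Simple Y → ∀ jX jY : Fin n,
      ¬ IsZero (X ⊗ I' jX) → ¬ IsZero (Y ⊗ I' jY) → jX ≠ jY → IsZero (X ⊗ Y)) := by
  -- key fact: for simple X and jX with X ⊗ I' jX nonzero, X ⊗ I' jX ≅ X and
  -- all other X ⊗ I' j are zero.
  have key : ∀ X : C, Simple X → ∀ jX : Fin n, ¬ IsZero (X ⊗ I' jX) →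
      Nonempty (X ⊗ I' jX ≅ X) ∧ ∀ j : Fin n, j ≠ jX → IsZero (X ⊗ I' j) := by
    intro X hX jX hjX
    let F : X ≅ ⨁ (fun j => X ⊗ I' j) :=
      (ρ_ X).symm ≪≫ whiskerLeftIso X e ≪≫ leftDistributor X I'
    let s : ∀ j : Fin n, (X ⊗ I' j) ⟶ X := fun j => biproduct.ι (fun j => X ⊗ I' j) j ≫ F.inv
    have hsr : ∀ j, s j ≫ (F.hom ≫ biproduct.π _ j) = 𝟙 _ := by
      intro j
      simp [s]
    have hmono : ∀ j, Mono (s j) := fun j =>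
      (SplitMono.mk (F.hom ≫ biproduct.π _ j) (hsr j)).mono
    have hiso : ∀ j, ¬ IsZero (X ⊗ I' j) → IsIso (s j) := by
      intro j hj
      haveI := hmono j
      apply isIso_of_mono_of_nonzero
      intro h0
      apply hj
      rw [IsZero.iff_id_eq_zero, ← hsr j, h0, zero_comp]
    haveI hX' := hX
    haveI := hiso jX hjX
    refine ⟨⟨asIso (s jX)⟩, ?_⟩
    intro j hj
    by_contra hjz
    haveI := hiso j hjz
    have hπ : F.hom ≫ biproduct.π (fun j => X ⊗ I' j) j = 0 := by
      have h1 : s jX ≫ F.hom ≫ biproduct.π (fun j => X ⊗ I' j) j = 0 := by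
        simp [s, biproduct.ι_π_ne _ (Ne.symm hj)]
      rwa [← cancel_epi (s jX), comp_zero]
    apply hjz
    rw [IsZero.iff_id_eq_zero, ← hsr j, hπ, comp_zero]
  have braid : ∀ (A B : C), IsZero (A ⊗ B) ↔ IsZero (B ⊗ A) := fun A B =>
    ⟨fun h => h.of_iso (β_ B A), fun h => h.of_iso (β_ A B)⟩
  constructor
  · intro X hX jX hjX
    obtain ⟨⟨i⟩, huniq⟩ := key X hX jX hjX
    refine ⟨fun h => hjX ((braid _ _).mpr h), ⟨(β_ (I' jX) X) ≪≫ i⟩, ?_⟩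
    intro j hj
    exact (braid _ _).mp (huniq j hj)
  · intro X Y hX hY jX jY hjX hjY hne
    obtain ⟨_, huniqX⟩ := key X hX jX hjX
    obtain ⟨⟨iY⟩, _⟩ := key Y hY jY hjY
    have hz : IsZero (X ⊗ I' jY) := huniqX jY (Ne.symm hne)
    have hz2 : IsZero ((X ⊗ I' jY) ⊗ Y) := aux_zero_tensor hz Y
    exact hz2.of_iso ((whiskerLeftIso X ((β_ (I' jY) Y) ≪≫ iY)).symm ≪≫ (α_ _ _ _).symm)
end
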